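/- arXiv:2202.03877 — 3 statements merged into one kernel-verified Lean document; each statement's English description precedes it below -/
import Mathlib

section
/- Let d ≥ 3 be an integer and λ ∈ (0, 1/d²). Then the improper integral ∫₀¹ ( (1/(1-t)) · (2(d-1))/( d-2 + d·√(1 + 4(d-1)λt/(1-t)) ) - 1 ) / t · dt converges and equals ln( d^{d-2} / ( (d-1)^{d-1} · λ ) ). -/
/-!
Put `a = 4(d-1)λ` and substitute `w = 1/√(1 + a t/(1-t)) = √((1-t)/(1+(a-1)t))`, which decreases
from `1` at `t = 0` to `0` at `t = 1`. In terms of `w` the integrand becomes the rational function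
`(2(d-1)(1+w) - a d w)(1+(a-1)w²) / (a w (1+w)(d+(d-2)w))`, and it is the `t`-derivative of
`(d-2) log(d+(d-2)w) + log(1+(a-1)w²) - d log(1+w)`. Since `λ d ≤ 1` the integrand is nonnegative,
so this antiderivative, continuous on `[0, 1]`, proves both the convergence of the improper integral
(the integrand blows up like `(1-t)^(-1/2)` at `t = 1`) and its value.
-/

open Real Set

namespace FreeGroupDetIntegral

noncomputable def integrand (D a t : ℝ) : ℝ :=
  ((1 / (1 - t)) * (2 * (D - 1)) / (D - 2 + D * √(1 + a * t / (1 - t))) - 1) / t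

noncomputable def sqrtRatio (a t : ℝ) : ℝ := √((1 - t) / (1 + (a - 1) * t))

noncomputable def primitiveInW (D a w : ℝ) : ℝ :=
  (D - 2) * log (D + (D - 2) * w) + log (1 + (a - 1) * w ^ 2) - D * log (1 + w)

noncomputable def integrandInW (D a w : ℝ) : ℝ :=
  (2 * (D - 1) * (1 + w) - a * D * w) * (1 + (a - 1) * w ^ 2) /
    (a * w * (1 + w) * (D + (D - 2) * w))

section sqrtRatio

variable {a t : ℝ}

lemma one_add_sub_one_mul_pos (ha : 0 < a) (ht : t ∈ Icc 0 1) : 0 < 1 + (a - 1) * t := by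
  nlinarith [mul_nonneg ha.le ht.1, ht.2]

lemma one_add_sub_one_mul_sq_pos (ha : 0 < a) {w : ℝ} (hw : w ∈ Icc 0 1) :
    0 < 1 + (a - 1) * w ^ 2 :=
  one_add_sub_one_mul_pos ha ⟨sq_nonneg w, pow_le_one₀ hw.1 hw.2⟩

@[simp] lemma sqrtRatio_zero (a : ℝ) : sqrtRatio a 0 = 1 := by simp [sqrtRatio]

@[simp] lemma sqrtRatio_one (a : ℝ) : sqrtRatio a 1 = 0 := by simp [sqrtRatio]

lemma sqrtRatio_sq (ha : 0 < a) (ht : t ∈ Icc 0 1) :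
    sqrtRatio a t ^ 2 = (1 - t) / (1 + (a - 1) * t) :=
  sq_sqrt (div_nonneg (by linarith [ht.2]) (one_add_sub_one_mul_pos ha ht).le)

lemma mul_one_add_sub_one_mul_sqrtRatio_sq (ha : 0 < a) (ht : t ∈ Icc 0 1) :
    t * (1 + (a - 1) * sqrtRatio a t ^ 2) = 1 - sqrtRatio a t ^ 2 := by
  rw [sqrtRatio_sq ha ht]
  linear_combination div_mul_cancel₀ (1 - t) (one_add_sub_one_mul_pos ha ht).ne'

lemma sqrtRatio_pos (ha : 0 < a) (ht : t ∈ Ico 0 1) : 0 < sqrtRatio a t :=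
  sqrt_pos.2 (div_pos (by linarith [ht.2]) (one_add_sub_one_mul_pos ha (Ico_subset_Icc_self ht)))

lemma sqrtRatio_le_one (ha : 0 < a) (ht : t ∈ Icc 0 1) : sqrtRatio a t ≤ 1 := by
  rw [sqrtRatio, sqrt_le_one, div_le_one (one_add_sub_one_mul_pos ha ht)]
  nlinarith [ht.1]

lemma sqrtRatio_lt_one (ha : 0 < a) (ht : t ∈ Ioc 0 1) : sqrtRatio a t < 1 := by
  have hw := mul_one_add_sub_one_mul_sqrtRatio_sq ha (Ioc_subset_Icc_self ht)
  refine (sqrtRatio_le_one ha (Ioc_subset_Icc_self ht)).lt_of_ne fun h ↦ ?_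
  rw [h] at hw
  nlinarith [mul_pos ht.1 ha]

lemma sqrt_one_add_div_eq_inv_sqrtRatio (ha : 0 < a) (ht : t ∈ Ico 0 1) :
    √(1 + a * t / (1 - t)) = (sqrtRatio a t)⁻¹ := by
  have h1 : 1 - t ≠ 0 := by linarith [ht.2]
  have h2 := (one_add_sub_one_mul_pos ha (Ico_subset_Icc_self ht)).ne'
  rw [sqrtRatio, ← sqrt_inv, inv_div]
  congr 1
  field_simp
  ring

lemma continuousOn_sqrtRatio (ha : 0 < a) : ContinuousOn (sqrtRatio a) (Icc 0 1) :=
  ((continuousOn_const.sub continuousOn_id).div (by fun_prop)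
    fun _ ht ↦ (one_add_sub_one_mul_pos ha ht).ne').sqrt

lemma hasDerivAt_sqrtRatio (ha : 0 < a) (ht : t ∈ Ico 0 1) :
    HasDerivAt (sqrtRatio a)
      (-(1 + (a - 1) * sqrtRatio a t ^ 2) ^ 2 / (2 * a * sqrtRatio a t)) t := by
  have hden := one_add_sub_one_mul_pos ha (Ico_subset_Icc_self ht)
  have hw := sqrtRatio_pos ha ht
  have hratio : HasDerivAt (fun s ↦ (1 - s) / (1 + (a - 1) * s))
      (-a / (1 + (a - 1) * t) ^ 2) t := by
    refine (((hasDerivAt_id t).const_sub 1).div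
      (((hasDerivAt_id t).const_mul (a - 1)).const_add 1) hden.ne').congr_deriv ?_
    simp only [id]
    ring
  refine (hratio.sqrt (div_pos (by linarith [ht.2]) hden).ne').congr_deriv ?_
  change _ / (2 * sqrtRatio a t) = _
  rw [sqrtRatio_sq ha (Ico_subset_Icc_self ht)]
  field_simp
  ring

end sqrtRatio

section InW

variable {D a w : ℝ}

lemma hasDerivAt_primitiveInW (h₁ : D + (D - 2) * w ≠ 0) (h₂ : 1 + (a - 1) * w ^ 2 ≠ 0)
    (h₃ : 1 + w ≠ 0) :
    HasDerivAt (primitiveInW D a)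
      (-2 * (2 * (D - 1) * (1 + w) - a * D * w) /
        ((1 + w) * (D + (D - 2) * w) * (1 + (a - 1) * w ^ 2))) w := by
  have hlog₁ := (((hasDerivAt_id w).const_mul (D - 2)).const_add D).log h₁
  have hlog₂ := (((hasDerivAt_pow 2 w).const_mul (a - 1)).const_add 1).log h₂
  have hlog₃ := ((hasDerivAt_id w).const_add 1).log h₃
  refine ((hlog₁.const_mul (D - 2)).add hlog₂ |>.sub (hlog₃.const_mul D)).congr_deriv ?_
  simp only [id, Nat.cast_ofNat, pow_one, Nat.add_one_sub_one]
  have h₂' : 1 + w ^ 2 * (a - 1) ≠ 0 := by rwa [mul_comm]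
  field_simp
  ring

lemma integrandInW_nonneg (hD : 1 < D) (ha : 0 < a) (haD : a * D ≤ 4 * (D - 1))
    (hw : w ∈ Ioc 0 1) : 0 ≤ integrandInW D a w := by
  obtain ⟨hw0, hw1⟩ := hw
  have hQ := one_add_sub_one_mul_sq_pos ha ⟨hw0.le, hw1⟩
  -- `a D w ≤ 4 (D - 1) w ≤ 2 (D - 1) (1 + w)`
  have hnum : 0 ≤ 2 * (D - 1) * (1 + w) - a * D * w := by nlinarith
  have hDw : 0 < D + (D - 2) * w := by nlinarith
  unfold integrandInW
  positivity

lemma continuousOn_primitiveInW (hD : 1 < D) (ha : 0 < a) :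
    ContinuousOn (primitiveInW D a) (Icc 0 1) := by
  refine (ContinuousOn.sub (ContinuousOn.add ?_ ?_) ?_)
  · refine continuousOn_const.mul (ContinuousOn.log (by fun_prop) fun w hw ↦ ?_)
    nlinarith [hw.1, hw.2]
  · exact ContinuousOn.log (by fun_prop) fun w hw ↦ (one_add_sub_one_mul_sq_pos ha hw).ne'
  · refine continuousOn_const.mul (ContinuousOn.log (by fun_prop) fun w hw ↦ ?_)
    linarith [hw.1]

end InW

variable {D a : ℝ}

lemma integrand_eq_integrandInW (hD : 1 < D) (ha : 0 < a) {t : ℝ} (ht : t ∈ Ioo 0 1) :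
    integrand D a t = integrandInW D a (sqrtRatio a t) := by
  have hrel := mul_one_add_sub_one_mul_sqrtRatio_sq ha (Ioo_subset_Icc_self ht)
  have hw0 := sqrtRatio_pos ha (Ioo_subset_Ico_self ht)
  have hw1 := sqrtRatio_lt_one ha (Ioo_subset_Ioc_self ht)
  rw [integrand, sqrt_one_add_div_eq_inv_sqrtRatio ha (Ioo_subset_Ico_self ht)]
  generalize sqrtRatio a t = w at *
  have hQ := one_add_sub_one_mul_sq_pos ha ⟨hw0.le, hw1.le⟩
  obtain rfl : t = (1 - w ^ 2) / (1 + (a - 1) * w ^ 2) := by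
    rw [eq_div_iff hQ.ne', hrel]
  have hQ' : 1 + w ^ 2 * (a - 1) ≠ 0 := by rw [mul_comm]; exact hQ.ne'
  have h1w : 1 - w ^ 2 ≠ 0 := by nlinarith
  have h1t : 1 - (1 - w ^ 2) / (1 + (a - 1) * w ^ 2) = a * w ^ 2 / (1 + (a - 1) * w ^ 2) := by
    field_simp
    ring
  have hDw : D + w * (D - 2) ≠ 0 := by nlinarith
  have hDw' : w * (D - 2) + D ≠ 0 := by nlinarith
  rw [integrandInW, h1t]
  field_simp
  ring

lemma hasDerivAt_primitiveInW_comp_sqrtRatio (hD : 1 < D) (ha : 0 < a) {t : ℝ}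
    (ht : t ∈ Ioo 0 1) :
    HasDerivAt (primitiveInW D a ∘ sqrtRatio a) (integrand D a t) t := by
  have hw0 := sqrtRatio_pos ha (Ioo_subset_Ico_self ht)
  have hw1 := sqrtRatio_lt_one ha (Ioo_subset_Ioc_self ht)
  have hQ := one_add_sub_one_mul_sq_pos ha ⟨hw0.le, hw1.le⟩
  have h₁ : 0 < D + (D - 2) * sqrtRatio a t := by nlinarith
  refine ((hasDerivAt_primitiveInW h₁.ne' hQ.ne' (by linarith)).comp t
    (hasDerivAt_sqrtRatio ha (Ioo_subset_Ico_self ht))).congr_deriv ?_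
  rw [integrand_eq_integrandInW hD ha ht, integrandInW]
  field_simp

theorem intervalIntegrable_integrand_and_integral_eq (hD : 1 < D) (ha : 0 < a)
    (haD : a * D ≤ 4 * (D - 1)) :
    IntervalIntegrable (integrand D a) MeasureTheory.volume 0 1 ∧
      ∫ t in (0 : ℝ)..1, integrand D a t = 2 * log 2 + (D - 2) * (log D - log (D - 1)) - log a := by
  have hcont : ContinuousOn (primitiveInW D a ∘ sqrtRatio a) (Icc 0 1) :=
    (continuousOn_primitiveInW hD ha).comp (continuousOn_sqrtRatio ha)
      fun t ht ↦ ⟨sqrt_nonneg _, sqrtRatio_le_one ha ht⟩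
  have hderiv (t : ℝ) (ht : t ∈ Ioo 0 1) :=
    hasDerivAt_primitiveInW_comp_sqrtRatio hD ha ht
  have hnonneg (t : ℝ) (ht : t ∈ Ioo 0 1) : 0 ≤ integrand D a t := by
    rw [integrand_eq_integrandInW hD ha ht]
    exact integrandInW_nonneg hD ha haD
      ⟨sqrtRatio_pos ha (Ioo_subset_Ico_self ht), sqrtRatio_le_one ha (Ioo_subset_Icc_self ht)⟩
  have hint : IntervalIntegrable (integrand D a) MeasureTheory.volume 0 1 := by
    apply intervalIntegral.intervalIntegrable_deriv_of_nonneg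
      (g := primitiveInW D a ∘ sqrtRatio a)
    all_goals simpa only [zero_le_one, uIcc_of_le, min_eq_left, max_eq_right]
  refine ⟨hint, ?_⟩
  have h₀ : primitiveInW D a 0 = (D - 2) * log D := by simp [primitiveInW]
  have h₁ : primitiveInW D a 1 = (D - 2) * (log 2 + log (D - 1)) + log a - D * log 2 := by
    rw [primitiveInW, ← log_mul two_ne_zero (by linarith), one_add_one_eq_two]
    ring_nf
  rw [intervalIntegral.integral_eq_sub_of_hasDerivAt_of_le zero_le_one hcont hderiv hint,
    Function.comp_apply, Function.comp_apply, sqrtRatio_one, sqrtRatio_zero, h₀, h₁]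
  ring

end FreeGroupDetIntegral

/-- the integral identity at the core of the computation of
`det_{F_{d-1}}(Id + ζ₁R_{x₁} + ⋯ + ζ_{d-1}R_{x_{d-1}})`. -/
theorem stmt8 (d : ℕ) (hd : 3 ≤ d) (lam : ℝ) (hlam : lam ∈ Set.Ioo (0:ℝ) (1 / (d : ℝ) ^ 2)) :
    IntervalIntegrable (fun t : ℝ =>
        ((1 / (1 - t)) * (2 * ((d : ℝ) - 1)) /
            ((d : ℝ) - 2 + d * Real.sqrt (1 + 4 * ((d : ℝ) - 1) * lam * t / (1 - t))) - 1) / t)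
      MeasureTheory.volume 0 1 ∧
    ∫ t in (0:ℝ)..1,
        ((1 / (1 - t)) * (2 * ((d : ℝ) - 1)) /
            ((d : ℝ) - 2 + d * Real.sqrt (1 + 4 * ((d : ℝ) - 1) * lam * t / (1 - t))) - 1) / t
      = Real.log ((d : ℝ) ^ (d - 2) / (((d : ℝ) - 1) ^ (d - 1) * lam)) := by
  obtain ⟨hlam0, hlam1⟩ := hlam
  have hD : (1 : ℝ) < d := by exact_mod_cast (by omega : 1 < d)
  have hD1 : (0 : ℝ) < d - 1 := sub_pos.2 hD
  have ha : 0 < 4 * ((d : ℝ) - 1) * lam := by positivity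
  have haD : 4 * ((d : ℝ) - 1) * lam * d ≤ 4 * ((d : ℝ) - 1) := by
    rw [lt_div_iff₀ (by positivity)] at hlam1
    nlinarith
  obtain ⟨hint, hval⟩ :=
    FreeGroupDetIntegral.intervalIntegrable_integrand_and_integral_eq hD ha haD
  refine ⟨hint, hval.trans ?_⟩
  have hd₁ : ((d - 1 : ℕ) : ℝ) = d - 1 := by rw [Nat.cast_sub (by omega), Nat.cast_one]
  have hd₂ : ((d - 2 : ℕ) : ℝ) = d - 2 := by rw [Nat.cast_sub (by omega), Nat.cast_two]
  have hlog4 : log (4 : ℝ) = 2 * log 2 := by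
    rw [show (4 : ℝ) = 2 ^ 2 by norm_num, log_pow, Nat.cast_two]
  rw [log_div (by positivity) (by positivity), log_mul (by positivity) hlam0.ne',
    log_mul (by positivity) hlam0.ne', log_mul (by norm_num) hD1.ne', log_pow, log_pow, hd₁, hd₂,
    hlog4]
  ring
end

section
/- For every complex number α, (1/2π)·∫₀^{2π} ln| e^{iθ} - α | dθ = ln( max(1, |α|) ), where for |α| = 1 the integrand has an integrable singularity and the identity still holds. -/
open scoped Real

/-- Jensen's formula / Mahler measure of the linear polynomial `X - α`. -/
theorem stmt9 (α : ℂ) :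
    (1 / (2 * π)) * ∫ θ in (0:ℝ)..(2 * π),
        Real.log ‖Complex.exp (θ * Complex.I) - α‖
      = Real.log (max 1 ‖α‖) := by
  rw [← Real.posLog_eq_log_max_one (norm_nonneg α),
    ← circleAverage_log_norm_sub_const_eq_posLog, Real.circleAverage_def, one_div, smul_eq_mul]
  simp only [circleMap_zero, Complex.ofReal_one, one_mul]
end

section
/- Let d ≥ 3 and for k ≥ 0 let a_k denote the number of functions j : {1,…,2k} → {0,1,…,d-1} such that x_{j(1)}·x_{j(2)}^{-1}·⋯·x_{j(2k-1)}·x_{j(2k)}^{-1} = 1 in the free group F_{d-1} on generators x_1,…,x_{d-1} (with the convention x_0 = 1). Then for all real t with 0 ≤ t < 1/(4(d-1)), the series ∑_{k≥0} a_k t^k converges and equals 2(d-1)/( d-2 + d·√(1 - 4(d-1)t) ). -/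
/-!
Read a word `j` letter by letter as a walk in the `d`-regular tree whose vertices are pairs
`(g, p)` of an element of `F_{d-1}` and a parity; the alternating product is trivial exactly when
the walk of length `2k` returns to the root. From every vertex but the root one letter moves
towards the root and the other `q = d - 1` away from it, so `a_k` counts weighted walks from `0`
to `0` on `ℕ`. Cutting such a walk at its first return to `0` gives
`a_{k+1} = (q + 1) ∑_{i+j=k} q^i C_i a_j`, the Catalan number `C_i` counting first passages.
With `Y(x) = ∑ C_i x^{i+1} = (1 - √(1 - 4x)) / 2` this is the renewal equation
`A(t) = 1 + (q + 1) / q · Y(q t) · A(t)`, whose coefficient is `< 1`; it yields both the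
convergence and the value of `A(t)`.
-/

open Finset

section Renewal

variable {b c : ℕ → ℝ}

lemma sum_range_succ_le_of_renewal (hb : ∀ n, 0 ≤ b n) (hc : ∀ n, 0 ≤ c n)
    (hrec : ∀ n, b (n + 1) = ∑ p ∈ antidiagonal n, c p.1 * b p.2) (n : ℕ) :
    ∑ k ∈ range (n + 1), b k ≤ b 0 + (∑ i ∈ range n, c i) * ∑ j ∈ range n, b j := by
  rw [sum_range_succ', add_comm, add_le_add_iff_left]
  simp_rw [hrec, Nat.sum_antidiagonal_eq_sum_range_succ (fun i j => c i * b j)]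
  rw [sum_range_diag_flip n (fun i j => c i * b j), sum_mul_sum]
  gcongr with i
  exacts [fun j _ _ => mul_nonneg (hc i) (hb j), Nat.sub_le n i]

lemma tsum_eq_add_mul_of_renewal (hb : ∀ n, 0 ≤ b n) (hc : ∀ n, 0 ≤ c n) (hbs : Summable b)
    (hcs : Summable c) (hrec : ∀ n, b (n + 1) = ∑ p ∈ antidiagonal n, c p.1 * b p.2) :
    ∑' n, b n = b 0 + (∑' n, c n) * ∑' n, b n := by
  rw [hcs.tsum_mul_tsum_eq_tsum_sum_antidiagonal hbs (hcs.mul_of_nonneg hbs hc hb),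
    hbs.tsum_eq_zero_add, add_right_inj]
  exact tsum_congr hrec

lemma hasSum_of_renewal {C : ℝ} (hb : ∀ n, 0 ≤ b n) (hc : ∀ n, 0 ≤ c n) (hC : HasSum c C)
    (hC1 : C < 1) (hrec : ∀ n, b (n + 1) = ∑ p ∈ antidiagonal n, c p.1 * b p.2) :
    HasSum b (b 0 / (1 - C)) := by
  have hC0 : 0 ≤ C := hC.nonneg hc
  have hbs : Summable b := by
    refine summable_of_sum_range_le hb (c := b 0 / (1 - C)) fun n => ?_
    induction n with
    | zero => simpa using div_nonneg (hb 0) (by linarith)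
    | succ n ih =>
      calc ∑ k ∈ range (n + 1), b k
          ≤ b 0 + (∑ i ∈ range n, c i) * ∑ j ∈ range n, b j :=
            sum_range_succ_le_of_renewal hb hc hrec n
        _ ≤ b 0 + C * (b 0 / (1 - C)) := by
            gcongr
            · exact sum_nonneg fun j _ => hb j
            · exact sum_le_hasSum _ (fun i _ => hc i) hC
        _ = b 0 / (1 - C) := by field_simp [(by linarith : 1 - C ≠ 0)]; ring
  have hB := tsum_eq_add_mul_of_renewal hb hc hbs hC.summable hrec
  rw [hC.tsum_eq] at hB
  convert hbs.hasSum using 1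
  rw [div_eq_iff (by linarith)]
  linarith

end Renewal

lemma catalan_mul_pow_succ (x : ℝ) (n : ℕ) :
    (catalan (n + 1) : ℝ) * x ^ (n + 1 + 1) =
      ∑ p ∈ antidiagonal n, (catalan p.1 * x ^ (p.1 + 1)) * (catalan p.2 * x ^ (p.2 + 1)) := by
  rw [catalan_succ', Nat.cast_sum, sum_mul]
  refine sum_congr rfl fun p hp => ?_
  rw [← (mem_antidiagonal.1 hp)]
  push_cast
  ring

section CatalanSeries

variable {x : ℝ} (hx0 : 0 ≤ x) (hx : x ≤ 1 / 4)
include hx0 hx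

lemma sum_range_catalan_mul_pow_le_half (n : ℕ) :
    ∑ i ∈ range n, (catalan i : ℝ) * x ^ (i + 1) ≤ 1 / 2 := by
  have hb : ∀ i, 0 ≤ (catalan i : ℝ) * x ^ (i + 1) := fun i => by positivity
  induction n with
  | zero => norm_num
  | succ n ih =>
    have h0 : 0 ≤ ∑ i ∈ range n, (catalan i : ℝ) * x ^ (i + 1) := sum_nonneg fun i _ => hb i
    have := sum_range_succ_le_of_renewal hb hb (catalan_mul_pow_succ x) n
    simp only [catalan_zero, Nat.cast_one, zero_add, pow_one, one_mul] at this
    nlinarith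

theorem hasSum_catalan_mul_pow :
    HasSum (fun n => (catalan n : ℝ) * x ^ (n + 1)) ((1 - √(1 - 4 * x)) / 2) := by
  have hb : ∀ i, 0 ≤ (catalan i : ℝ) * x ^ (i + 1) := fun i => by positivity
  have hbs := summable_of_sum_range_le hb (sum_range_catalan_mul_pow_le_half hx0 hx)
  have hle := Real.tsum_le_of_sum_range_le hb (sum_range_catalan_mul_pow_le_half hx0 hx)
  have hquad := tsum_eq_add_mul_of_renewal hb hb hbs hbs (catalan_mul_pow_succ x)
  simp only [catalan_zero, Nat.cast_one, zero_add, pow_one, one_mul] at hquad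
  set Y := ∑' n, (catalan n : ℝ) * x ^ (n + 1)
  -- `Y = x + Y²` has the roots `(1 ± √(1 - 4x)) / 2`, and `Y ≤ 1 / 2` selects the smaller one.
  have hsqrt : √(1 - 4 * x) = 1 - 2 * Y := by
    rw [Real.sqrt_eq_iff_mul_self_eq (by linarith) (by linarith)]
    linear_combination 4 * hquad
  rw [hsqrt, show (1 - (1 - 2 * Y)) / 2 = Y by ring]
  exact hbs.hasSum

end CatalanSeries

/-- `radialWalks q n h` counts walks of length `n` from `h` to `0` on `ℕ`, a step from `0` having
`q + 1` choices and a step from `h > 0` one choice down and `q` up: the distances to the root along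
walks in the `(q + 1)`-regular tree. `firstPassages` counts those that visit `0` only at the end. -/
def radialWalks (q : ℕ) : ℕ → ℕ → ℕ
  | 0, 0 => 1
  | 0, _ + 1 => 0
  | n + 1, 0 => (q + 1) * radialWalks q n 1
  | n + 1, h + 1 => radialWalks q n h + q * radialWalks q n (h + 2)

def firstPassages (q : ℕ) : ℕ → ℕ → ℕ
  | 0, 0 => 1
  | 0, _ + 1 => 0
  | _ + 1, 0 => 0
  | n + 1, h + 1 => firstPassages q n h + q * firstPassages q n (h + 2)

section RadialWalks

variable {q : ℕ}

lemma firstPassages_eq_zero_of_odd {n h : ℕ} (hnh : Odd (n + h)) : firstPassages q n h = 0 := by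
  induction n generalizing h with
  | zero => cases h <;> simp_all [firstPassages]
  | succ n ih =>
    cases h with
    | zero => rfl
    | succ h =>
      rw [Nat.odd_iff] at hnh
      simp only [firstPassages, ih (h := h) (Nat.odd_iff.2 (by omega)),
        ih (h := h + 2) (Nat.odd_iff.2 (by omega)), mul_zero, add_zero]

lemma firstPassages_add_one (n h : ℕ) :
    firstPassages q n (h + 1) =
      ∑ p ∈ antidiagonal n, firstPassages q p.1 1 * firstPassages q p.2 h := by
  induction n generalizing h with
  | zero => simp [firstPassages]
  | succ n ih =>
    rw [Nat.sum_antidiagonal_succ']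
    cases h with
    | zero => simp [firstPassages]
    | succ h =>
      simp only [firstPassages, mul_zero, zero_add, ih, mul_add, sum_add_distrib, mul_sum,
        mul_left_comm]

lemma radialWalks_eq_sum_firstPassages (n h : ℕ) :
    radialWalks q n h = ∑ p ∈ antidiagonal n, firstPassages q p.1 h * radialWalks q p.2 0 := by
  induction n generalizing h with
  | zero => cases h <;> simp [radialWalks, firstPassages]
  | succ n ih =>
    rw [Nat.sum_antidiagonal_succ]
    cases h with
    | zero => simp [firstPassages]
    | succ h =>
      simp only [radialWalks, firstPassages, zero_mul, zero_add, ih, add_mul, sum_add_distrib,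
        mul_sum, mul_assoc]

lemma sum_antidiagonal_two_mul_add_one {M : Type*} [AddCommMonoid M] (f : ℕ → ℕ → M)
    (hf : ∀ i j, f (2 * i) j = 0) (k : ℕ) :
    ∑ p ∈ antidiagonal (2 * k + 1), f p.1 p.2 =
      ∑ p ∈ antidiagonal k, f (2 * p.1 + 1) (2 * p.2) := by
  induction k generalizing f with
  | zero => simp [Nat.sum_antidiagonal_succ, show ∀ j, f 0 j = 0 from hf 0]
  | succ k ih =>
    rw [show 2 * (k + 1) + 1 = 2 * k + 1 + 1 + 1 by ring, Nat.sum_antidiagonal_succ,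
      Nat.sum_antidiagonal_succ]
    dsimp only
    rw [ih (fun i j => f (i + 1 + 1) j) fun i j => hf (i + 1) j, Nat.sum_antidiagonal_succ]
    simp [mul_add, add_assoc, show ∀ j, f 0 j = 0 from hf 0]

lemma firstPassages_two_mul_one (i : ℕ) : firstPassages q (2 * i) 1 = 0 :=
  firstPassages_eq_zero_of_odd (by simp)

lemma firstPassages_two_mul_add_one_one (i : ℕ) :
    firstPassages q (2 * i + 1) 1 = q ^ i * catalan i := by
  induction i using Nat.strong_induction_on with
  | _ i ih =>
    cases i with
    | zero => simp [firstPassages]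
    | succ i =>
      have hsplit : firstPassages q (2 * i + 2) 2 = ∑ p ∈ antidiagonal i,
          firstPassages q (2 * p.1 + 1) 1 * firstPassages q (2 * p.2 + 1) 1 := by
        rw [firstPassages_add_one, Nat.sum_antidiagonal_succ', firstPassages.eq_2, mul_zero,
          zero_add]
        exact sum_antidiagonal_two_mul_add_one
          (fun a b => firstPassages q a 1 * firstPassages q (b + 1) 1)
          (fun a b => by simp [firstPassages_two_mul_one]) i
      calc firstPassages q (2 * (i + 1) + 1) 1
          = firstPassages q (2 * i + 1 + 1) 0 + q * firstPassages q (2 * i + 2) 2 := rfl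
        _ = q * firstPassages q (2 * i + 2) 2 := by rw [firstPassages.eq_3, zero_add]
        _ = q * ∑ p ∈ antidiagonal i, q ^ p.1 * catalan p.1 * (q ^ p.2 * catalan p.2) := by
            rw [hsplit]
            refine congrArg _ (sum_congr rfl fun p hp => ?_)
            have hpi := mem_antidiagonal.1 hp
            rw [ih p.1 (by omega), ih p.2 (by omega)]
        _ = q ^ (i + 1) * catalan (i + 1) := by
            rw [catalan_succ', mul_sum, mul_sum]
            refine sum_congr rfl fun p hp => ?_
            rw [← mem_antidiagonal.1 hp]
            ring

lemma radialWalks_two_mul_add_two (k : ℕ) :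
    radialWalks q (2 * k + 2) 0 =
      ∑ p ∈ antidiagonal k, (q + 1) * (q ^ p.1 * catalan p.1) * radialWalks q (2 * p.2) 0 := by
  show (q + 1) * radialWalks q (2 * k + 1) 1 = _
  rw [radialWalks_eq_sum_firstPassages, sum_antidiagonal_two_mul_add_one
    (fun a b => firstPassages q a 1 * radialWalks q b 0)
    (fun a b => by simp [firstPassages_two_mul_one]), mul_sum]
  simp only [firstPassages_two_mul_add_one_one, mul_assoc]

theorem hasSum_radialWalks (hq : 1 ≤ q) {t : ℝ} (ht0 : 0 ≤ t) (ht : 4 * q * t < 1) :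
    HasSum (fun k => (radialWalks q (2 * k) 0 : ℝ) * t ^ k)
      (2 * q / (q - 1 + (q + 1) * √(1 - 4 * q * t))) := by
  have hq1 : (1 : ℝ) ≤ q := by exact_mod_cast hq
  have hq0 : (0 : ℝ) < q := by linarith
  have hs : 0 < √(1 - 4 * q * t) := Real.sqrt_pos.2 (by linarith)
  have hc : HasSum (fun i => ((q : ℝ) + 1) * (q ^ i * catalan i) * t ^ (i + 1))
      ((q + 1) / q * ((1 - √(1 - 4 * q * t)) / 2)) := by
    have h := (hasSum_catalan_mul_pow (x := q * t) (by positivity) (by linarith)).mul_left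
      (((q : ℝ) + 1) / q)
    rw [← mul_assoc 4] at h
    refine h.congr_fun fun i => ?_
    field_simp
    ring
  have hrec : ∀ k, (radialWalks q (2 * (k + 1)) 0 : ℝ) * t ^ (k + 1) =
      ∑ p ∈ antidiagonal k, ((q : ℝ) + 1) * (q ^ p.1 * catalan p.1) * t ^ (p.1 + 1) *
        ((radialWalks q (2 * p.2) 0 : ℝ) * t ^ p.2) := by
    intro k
    rw [mul_add_one, radialWalks_two_mul_add_two]
    push_cast
    rw [sum_mul]
    refine sum_congr rfl fun p hp => ?_
    rw [← mem_antidiagonal.1 hp]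
    ring
  have hC1 : (q + 1) / q * ((1 - √(1 - 4 * q * t)) / 2) < (1 : ℝ) := by
    rw [div_mul_eq_mul_div, div_lt_one hq0]
    nlinarith [mul_pos (by linarith : (0 : ℝ) < q + 1) hs]
  convert hasSum_of_renewal (b := fun k => (radialWalks q (2 * k) 0 : ℝ) * t ^ k)
    (fun _ => by positivity) (fun _ => by positivity) hc hC1 hrec using 1
  simp only [radialWalks, Nat.cast_one, pow_zero, mul_one]
  field_simp
  ring

end RadialWalks

section Tree

variable {α : Type*}

/-- The letter `a` leads from `(g, true)` to `(g * x_a, false)` and from `(g, false)` to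
`(g * x_a⁻¹, true)`, where `x_none = 1`: the edges of the `(|α| + 1)`-regular tree. -/
def treeStep (v : FreeGroup α × Bool) (a : Option α) : FreeGroup α × Bool :=
  (v.1 * (a.elim 1 FreeGroup.of : FreeGroup α) ^ (if v.2 then (1 : ℤ) else -1), !v.2)

def wordDist : List (α × Bool) → Bool → ℕ
  | [], p => if p then 0 else 1
  | (_, b) :: w, p => wordDist w (!b) + if p = b then 1 else 2

lemma wordDist_eq_zero_iff {w : List (α × Bool)} {p : Bool} :
    wordDist w p = 0 ↔ w = [] ∧ p = true := by
  cases w with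
  | nil => cases p <;> simp [wordDist]
  | cons x w =>
    simp only [wordDist, reduceCtorEq, false_and, iff_false]
    split_ifs <;> simp

lemma foldl_treeStep_ofFn {n : ℕ} (j : Fin n → Option α) :
    (List.ofFn j).foldl treeStep (1, true) =
      (((List.finRange n).map fun m =>
        ((j m).elim 1 FreeGroup.of : FreeGroup α)
          ^ (if m.val % 2 = 0 then (1 : ℤ) else -1)).prod,
        decide (Even n)) := by
  induction n with
  | zero => rfl
  | succ n ih =>
    rw [List.ofFn_succ', List.concat_eq_append, List.foldl_append, ih, List.finRange_succ_last]
    rcases Nat.mod_two_eq_zero_or_one n with h | h <;>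
      simp [treeStep, Nat.even_add_one, Nat.even_iff, Function.comp_def, h]

noncomputable def walksToRoot (n : ℕ) (v : FreeGroup α × Bool) : ℕ :=
  Nat.card {j : Fin n → Option α // (List.ofFn j).foldl treeStep v = (1, true)}

lemma walksToRoot_succ [Fintype α] (n : ℕ) (v : FreeGroup α × Bool) :
    walksToRoot (n + 1) v = ∑ a : Option α, walksToRoot n (treeStep v a) := by
  let e : {j : Fin (n + 1) → Option α // (List.ofFn j).foldl treeStep v = (1, true)} ≃
      Σ a, {t : Fin n → Option α // (List.ofFn t).foldl treeStep (treeStep v a) = (1, true)} :=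
    (((Fin.consEquiv fun _ => Option α).subtypeEquiv fun c => by
      simp [Fin.consEquiv, List.ofFn_succ]).symm).trans
      (Equiv.subtypeProdEquivSigmaSubtype fun a t =>
        (List.ofFn t).foldl treeStep (treeStep v a) = (1, true))
  rw [walksToRoot, Nat.card_congr e, Nat.card_sigma]
  rfl

variable [DecidableEq α]

/-- The reduced word of `g⁻¹` starts with the last letter of `g`, the edge through which the
geodesic from the root `(1, true)` reaches `(g, p)`. -/
def treeDist (v : FreeGroup α × Bool) : ℕ := wordDist v.1⁻¹.toWord v.2

lemma treeDist_eq_zero_iff {v : FreeGroup α × Bool} : treeDist v = 0 ↔ v = (1, true) := by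
  simp only [treeDist, wordDist_eq_zero_iff, FreeGroup.toWord_eq_nil_iff, inv_eq_one,
    Prod.ext_iff]

lemma treeDist_root : treeDist ((1, true) : FreeGroup α × Bool) = 0 :=
  treeDist_eq_zero_iff.2 rfl

lemma treeDist_treeStep_none (v : FreeGroup α × Bool) :
    treeDist (treeStep v none) = wordDist v.1⁻¹.toWord (!v.2) := by
  simp [treeStep, treeDist]

lemma treeDist_treeStep_some (v : FreeGroup α × Bool) (i : α) :
    treeDist (treeStep v (some i)) =
      wordDist (FreeGroup.reduce ((i, !v.2) :: v.1⁻¹.toWord)) (!v.2) := by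
  obtain ⟨g, p⟩ := v
  have hinv : (FreeGroup.of i ^ (if p then (1 : ℤ) else -1))⁻¹ = FreeGroup.mk [(i, !p)] := by
    cases p
    · simp [FreeGroup.of]
    · simp [FreeGroup.of, FreeGroup.inv_mk, FreeGroup.invRev]
  simp only [treeDist, treeStep, Option.elim, mul_inv_rev, hinv, FreeGroup.toWord_mul,
    FreeGroup.toWord_mk, FreeGroup.reduce_singleton, List.singleton_append]

lemma treeDist_treeStep_root (a : Option α) : treeDist (treeStep (1, true) a) = 1 := by
  cases a with
  | none => simp [treeDist_treeStep_none, wordDist]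
  | some i => simp [treeDist_treeStep_some, wordDist]

lemma treeDist_treeStep {v : FreeGroup α × Bool} (hv : v ≠ (1, true)) :
    ∃ a₀ : Option α, treeDist (treeStep v a₀) + 1 = treeDist v ∧
      ∀ a ≠ a₀, treeDist (treeStep v a) = treeDist v + 1 := by
  obtain ⟨g, p⟩ := v
  have hred := FreeGroup.reduce_toWord g⁻¹
  have hdist : treeDist (g, p) = wordDist g⁻¹.toWord p := rfl
  simp only [Option.forall, ne_eq, Option.exists, treeDist_treeStep_none, treeDist_treeStep_some,
    FreeGroup.reduce.cons, hred, hdist]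
  rcases hw : g⁻¹.toWord with _ | ⟨⟨j, b⟩, t⟩
  · obtain rfl : p = false := by
      have : g = 1 := inv_eq_one.1 (FreeGroup.toWord_eq_nil_iff.1 hw)
      simpa [this] using hv
    simp [wordDist]
  -- `Or.inl`: the step towards the root is `none`; `Or.inr ⟨j, _⟩`: it cancels the head `(j, b)`.
  · by_cases hpb : p = b
    · subst hpb
      refine Or.inr ⟨j, ?_, ?_, fun i hi => ?_⟩
      · simp [wordDist]
      · simp [wordDist]
      · have hij : i ≠ j := by simpa using hi
        simp [wordDist, hij]
    · obtain rfl : p = !b := by cases p <;> cases b <;> simp_all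
      refine Or.inl ⟨?_, by simp, fun i _ => ?_⟩
      · simp [wordDist]
      · simp [wordDist]

lemma walksToRoot_zero (v : FreeGroup α × Bool) :
    walksToRoot 0 v = if v = (1, true) then 1 else 0 := by
  split_ifs with hv <;> simp [walksToRoot, hv]

theorem walksToRoot_eq_radialWalks [Fintype α] (n : ℕ) (v : FreeGroup α × Bool) :
    walksToRoot n v = radialWalks (Fintype.card α) n (treeDist v) := by
  induction n generalizing v with
  | zero =>
    rw [walksToRoot_zero]
    by_cases hv : v = (1, true)
    · simp [hv, treeDist_root, radialWalks]
    · obtain ⟨h, hh⟩ := Nat.exists_eq_succ_of_ne_zero (mt treeDist_eq_zero_iff.1 hv)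
      simp [hv, hh, radialWalks]
  | succ n ih =>
    simp only [walksToRoot_succ, ih]
    by_cases hv : v = (1, true)
    · subst hv
      simp [treeDist_treeStep_root, treeDist_root, radialWalks]
    · obtain ⟨a₀, hdown, hup⟩ := treeDist_treeStep hv
      obtain ⟨h, hh⟩ := Nat.exists_eq_succ_of_ne_zero (mt treeDist_eq_zero_iff.1 hv)
      rw [← add_sum_erase _ _ (mem_univ a₀), sum_congr rfl fun a ha => by
        rw [hup a (ne_of_mem_erase ha)], sum_const, card_erase_of_mem (mem_univ a₀), card_univ,
        Fintype.card_option, hh]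
      simp [radialWalks, show treeDist (treeStep v a₀) = h by omega]

theorem card_trivial_alternating_words_eq_radialWalks [Fintype α] (k : ℕ) :
    Nat.card {j : Fin (2 * k) → Option α //
        ((List.finRange (2 * k)).map fun m =>
          ((j m).elim 1 FreeGroup.of : FreeGroup α)
            ^ (if m.val % 2 = 0 then (1 : ℤ) else -1)).prod = 1} =
      radialWalks (Fintype.card α) (2 * k) 0 := by
  trans walksToRoot (2 * k) ((1, true) : FreeGroup α × Bool)
  · refine Nat.card_congr (Equiv.subtypeEquivRight fun j => ?_)
    simp [foldl_treeStep_ofFn]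
  · rw [walksToRoot_eq_radialWalks, treeDist_root]

end Tree

theorem stmt18_general (d : ℕ) (t : ℝ)
    (ht : t ∈ Set.Ico (0:ℝ) (1 / (4 * ((d : ℝ) - 1)))) :
    HasSum (fun k : ℕ =>
        ((Nat.card {j : Fin (2 * k) → Option (Fin (d - 1)) //
            ((List.finRange (2 * k)).map fun m =>
              ((j m).elim 1 FreeGroup.of : FreeGroup (Fin (d - 1)))
                ^ (if m.val % 2 = 0 then (1 : ℤ) else -1)).prod = 1}) : ℝ) * t ^ k)
      (2 * ((d : ℝ) - 1) / ((d : ℝ) - 2 + d * Real.sqrt (1 - 4 * ((d : ℝ) - 1) * t))) := by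
  obtain ⟨ht0, ht⟩ := ht
  have hd : (1 : ℝ) < d := by
    by_contra! h
    have : 1 / (4 * ((d : ℝ) - 1)) ≤ 0 :=
      div_nonpos_of_nonneg_of_nonpos zero_le_one (by linarith)
    linarith
  have hq : ((d - 1 : ℕ) : ℝ) = d - 1 := by
    rw [Nat.cast_sub (by exact_mod_cast hd.le), Nat.cast_one]
  have hd2 : 2 ≤ d := by exact_mod_cast hd
  have key := hasSum_radialWalks (q := d - 1) (by omega) ht0
    (by rw [hq]; have := (lt_div_iff₀ (by linarith)).1 ht; linarith)
  rw [hq] at key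
  simp_rw [card_trivial_alternating_words_eq_radialWalks, Fintype.card_fin]
  convert key using 2
  ring

/-- the generating series of the numbers `a_k` of trivial alternating words
of length `2k` (equivalently, closed walks of length `2k` on the `d`-regular tree) equals
`2(d-1)/(d-2 + d√(1-4(d-1)t))` for `0 ≤ t < 1/(4(d-1))`. -/
theorem stmt18 (d : ℕ) (hd : 3 ≤ d) (t : ℝ)
    (ht : t ∈ Set.Ico (0:ℝ) (1 / (4 * ((d : ℝ) - 1)))) :
    HasSum (fun k : ℕ =>
        ((Nat.card {j : Fin (2 * k) → Option (Fin (d - 1)) //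
            ((List.finRange (2 * k)).map fun m =>
              ((j m).elim 1 FreeGroup.of : FreeGroup (Fin (d - 1)))
                ^ (if m.val % 2 = 0 then (1 : ℤ) else -1)).prod = 1}) : ℝ) * t ^ k)
      (2 * ((d : ℝ) - 1) / ((d : ℝ) - 2 + d * Real.sqrt (1 - 4 * ((d : ℝ) - 1) * t))) :=
  stmt18_general d t ht
end
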